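/- arXiv:2103.02471 — 9 statements merged into one kernel-verified Lean document; each statement's English description precedes it below -/
import Mathlib

section
/- Let R be a commutative ring, A a commutative group, and B a finite subgroup of A such that the image of the cardinality |B| in R is invertible. Set e := |B|⁻¹ · ∑_{b ∈ B} [b] in the group algebra R[A]. Then e is an idempotent element of R[A], the R-algebra homomorphism π : R[A] → R[A/B] induced by the quotient homomorphism A → A/B sends e to 1, and the kernel of π equals the principal ideal of R[A] generated by 1 − e. -/
/-!
With `s = ∑_{b ∈ B} [b]`, translation invariance `[b] s = s` for `b ∈ B` gives `s² = |B| s`,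
so `e = |B|⁻¹ s` is idempotent, and `π s = |B|` gives `π e = 1`. Since `[a] s` only depends on
the coset `aB`, the product `x s` factors through `π x`; hence `x ∈ ker π` forces `x e = 0`,
i.e. `x = x (1 - e)`.
-/

theorem RingHom.ker_eq_span_one_sub {S T : Type*} [Ring S] [Ring T] (f : S →+* T) {e : S}
    (he : f e = 1) (h : ∀ x, f x = 0 → x * e = 0) : RingHom.ker f = Ideal.span {1 - e} := by
  refine le_antisymm (fun x hx => Ideal.mem_span_singleton'.mpr ⟨x, ?_⟩) ?_
  · rw [mul_sub, mul_one, h x hx, sub_zero]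
  · rw [Ideal.span_le, Set.singleton_subset_iff, SetLike.mem_coe, RingHom.mem_ker, map_sub,
      map_one, he, sub_self]

namespace MonoidAlgebra

variable {R A : Type*} [Group A] {B : Subgroup A} [Fintype B]

section Semiring

variable [Semiring R]

variable (R B) in
noncomputable def subgroupSum : MonoidAlgebra R A := ∑ b : B, of R A b

theorem of_mul_subgroupSum {b : A} (hb : b ∈ B) :
    of R A b * subgroupSum R B = subgroupSum R B := by
  rw [subgroupSum, Finset.mul_sum]
  simp_rw [← map_mul]
  exact Equiv.sum_comp (Equiv.mulLeft (⟨b, hb⟩ : B)) (fun c : B => of R A c)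

theorem subgroupSum_mul_self :
    subgroupSum R B * subgroupSum R B = (Fintype.card B : R) • subgroupSum R B := by
  nth_rw 1 [subgroupSum]
  rw [Finset.sum_mul, Finset.sum_congr rfl fun b _ => of_mul_subgroupSum b.2, Finset.sum_const,
    Finset.card_univ, Nat.cast_smul_eq_nsmul]

theorem of_mul_subgroupSum_eq_of_mk_eq {a a' : A} (h : (a : A ⧸ B) = a') :
    of R A a * subgroupSum R B = of R A a' * subgroupSum R B := by
  rw [← mul_inv_cancel_left a a', map_mul, mul_assoc, of_mul_subgroupSum (QuotientGroup.eq.mp h)]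

theorem mul_subgroupSum_eq_liftNC_mapDomain (x : MonoidAlgebra R A) :
    x * subgroupSum R B = liftNC (singleAddHom 1)
      (fun q : A ⧸ B => of R A q.out * subgroupSum R B) (mapDomain QuotientGroup.mk x) := by
  induction x using induction_linear with
  | zero => simp
  | add x y hx hy => rw [add_mul, hx, hy, mapDomain_add, map_add]
  | single a r =>
    rw [mapDomain_single, liftNC_single,
      ← of_mul_subgroupSum_eq_of_mk_eq (QuotientGroup.out_eq' _).symm]
    simp [← mul_assoc]

theorem mul_subgroupSum_eq_zero {x : MonoidAlgebra R A}
    (hx : mapDomain (QuotientGroup.mk : A → A ⧸ B) x = 0) : x * subgroupSum R B = 0 := by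
  rw [mul_subgroupSum_eq_liftNC_mapDomain, hx, map_zero]

end Semiring

variable [CommSemiring R]

theorem isIdempotentElem_smul_subgroupSum {u : R} (hu : u * Fintype.card B = 1) :
    IsIdempotentElem (u • subgroupSum R B) := by
  rw [IsIdempotentElem, smul_mul_smul_comm, subgroupSum_mul_self, smul_smul, mul_assoc, hu,
    mul_one]

theorem mapDomainAlgHom_mk'_subgroupSum [B.Normal] :
    mapDomainAlgHom R R (QuotientGroup.mk' B) (subgroupSum R B) = Fintype.card B := by
  have hB (b : B) : mapDomainAlgHom R R (QuotientGroup.mk' B) (of R A b) = 1 := by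
    simp [(QuotientGroup.eq_one_iff _).mpr b.2, one_def]
  rw [subgroupSum, map_sum, Finset.sum_congr rfl fun b _ => hB b, Finset.sum_const,
    Finset.card_univ, nsmul_one]

end MonoidAlgebra

/-- The transfer idempotent for a finite subgroup `B` of a commutative group `A` over a
commutative ring `R` in which `|B|` is invertible: `e = |B|⁻¹ ∑_{b ∈ B} [b]` is idempotent,
the induced map `π : R[A] → R[A/B]` sends `e` to `1`, and `ker π = (1 - e)`. -/
theorem transfer_idempotent_group_algebra
    {R : Type*} [CommRing R] {A : Type*} [CommGroup A]
    (B : Subgroup A) [Fintype B]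
    (hu : IsUnit ((Fintype.card B : R)))
    (e : MonoidAlgebra R A)
    (he : e = (↑hu.unit⁻¹ : R) • ∑ b : B, MonoidAlgebra.of R A (b : A))
    (π : MonoidAlgebra R A →ₐ[R] MonoidAlgebra R (A ⧸ B))
    (hπ : π = MonoidAlgebra.mapDomainAlgHom R R (QuotientGroup.mk' B)) :
    IsIdempotentElem e ∧ π e = 1 ∧ RingHom.ker π = Ideal.span {1 - e} := by
  obtain ⟨u, hinv, rfl⟩ :
      ∃ u : R, u * Fintype.card B = 1 ∧ e = u • MonoidAlgebra.subgroupSum R B :=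
    ⟨_, hu.val_inv_mul, he⟩
  have hπe : π (u • MonoidAlgebra.subgroupSum R B) = 1 := by
    rw [map_smul, hπ, MonoidAlgebra.mapDomainAlgHom_mk'_subgroupSum, ← nsmul_one,
      ← Nat.cast_smul_eq_nsmul R, smul_smul, hinv, one_smul]
  refine ⟨MonoidAlgebra.isIdempotentElem_smul_subgroupSum hinv, hπe,
    RingHom.ker_eq_span_one_sub _ hπe fun x hx => ?_⟩
  rw [mul_smul_comm, MonoidAlgebra.mul_subgroupSum_eq_zero (by simpa [hπ] using hx), smul_zero]
end

section
/- Let m be a positive integer and R a commutative ring in which the image of m is invertible. Then the natural R-algebra homomorphism R[X]/(X^m − 1) → ∏_{d ∣ m} R[X]/(Φ_d), whose component at each positive divisor d of m is the quotient map induced by the divisibility Φ_d ∣ X^m − 1 in R[X], is bijective. -/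
/-!
Over a ring in which `m` is invertible, `X^m - 1` is separable, so any two distinct cyclotomic
factors `Φ_d`, `Φ_e` of it (whose product still divides it) are coprime. Since
`∏_{d ∣ m} Φ_d = X^m - 1`, the Chinese remainder theorem for the pairwise coprime ideals `(Φ_d)`
gives the decomposition.
-/

open Polynomial

namespace Ideal

theorem bijective_pi_factor_of_eq_iInf {A ι : Type*} [CommRing A] [Finite ι]
    {J : Ideal A} {I : ι → Ideal A} (hJ : J = ⨅ i, I i)
    (hI : Pairwise (Function.onFun IsCoprime I)) (hle : ∀ i, J ≤ I i) :
    Function.Bijective (RingHom.pi fun i => Quotient.factor (hle i)) := by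
  subst hJ
  have hcrt : RingHom.pi (fun i => Quotient.factor (hle i)) = quotientInfToPiQuotient I :=
    Quotient.ringHom_ext (RingHom.ext fun _ => rfl)
  rw [hcrt]
  exact ⟨quotientInfToPiQuotient_inj I, quotientInfToPiQuotient_surj hI⟩

end Ideal

namespace Polynomial

theorem isCoprime_cyclotomic_of_dvd {R : Type*} [CommRing R] {m d e : ℕ} (hm : 0 < m)
    (hu : IsUnit (m : R)) (hd : d ∣ m) (he : e ∣ m) (hde : d ≠ e) :
    IsCoprime (cyclotomic d R) (cyclotomic e R) := by
  have hsep : ((X : R[X]) ^ m - 1).Separable := by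
    simpa using separable_X_pow_sub_C_unit (1 : Rˣ) hu
  have hdvd : cyclotomic d R * cyclotomic e R ∣ X ^ m - 1 := by
    rw [← prod_cyclotomic_eq_X_pow_sub_one hm, ← Finset.prod_pair (f := (cyclotomic · R)) hde]
    exact Finset.prod_dvd_prod_of_subset _ _ _
      (by simp [Finset.insert_subset_iff, hd, he, hm.ne'])
  exact (hsep.of_dvd hdvd).isCoprime

end Polynomial

/-- If `m` is invertible in a commutative ring `R`, the natural map
`R[X]/(X^m − 1) → ∏_{d ∣ m} R[X]/(Φ_d)` is bijective. -/
theorem group_algebra_cyclotomic_decomposition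
    {R : Type*} [CommRing R] (m : ℕ) (hm : 0 < m) (hu : IsUnit (m : R)) :
    Function.Bijective
      (Pi.ringHom (fun d : m.divisors =>
        Ideal.Quotient.factor
          (S := Ideal.span {(X : R[X]) ^ m - 1})
          (T := Ideal.span {Polynomial.cyclotomic (d : ℕ) R})
          (Ideal.span_singleton_le_span_singleton.mpr
            (Polynomial.prod_cyclotomic_eq_X_pow_sub_one hm R ▸
              Finset.dvd_prod_of_mem (fun i => Polynomial.cyclotomic i R) d.2)))) := by
  have hcop : ∀ d e : m.divisors, d ≠ e → IsCoprime (cyclotomic (d : ℕ) R) (cyclotomic e R) :=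
    fun d e hde => isCoprime_cyclotomic_of_dvd hm hu (Nat.dvd_of_mem_divisors d.2)
      (Nat.dvd_of_mem_divisors e.2) (Subtype.coe_injective.ne hde)
  refine Ideal.bijective_pi_factor_of_eq_iInf ?_
    (fun d e hde => (Ideal.isCoprime_span_singleton_iff _ _).mpr (hcop d e hde)) _
  rw [Ideal.iInf_span_singleton hcop, Finset.prod_coe_sort m.divisors (cyclotomic · R),
    prod_cyclotomic_eq_X_pow_sub_one hm]
end

section
/- Let m be a positive integer, R a commutative ring in which the image of m is invertible, and d a positive divisor of m with d ≠ m. Then the ideal of the polynomial ring R[X] generated by the two elements Φ_m and X^d − 1 is the unit ideal. -/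
open Polynomial

/-- If `m` is invertible in `R` and `d` is a proper positive divisor of `m`, then the ideal of
`R[X]` generated by `Φ_m` and `X^d − 1` is the unit ideal. -/
theorem cyclotomic_comaximal_X_pow_sub_one
    {R : Type*} [CommRing R] (m d : ℕ) (hm : 0 < m) (hu : IsUnit (m : R))
    (hd0 : 0 < d) (hdvd : d ∣ m) (hdm : d ≠ m) :
    Ideal.span ({Polynomial.cyclotomic m R, (X : R[X]) ^ d - 1} : Set R[X]) = ⊤ := by
  set I : Ideal R[X] := Ideal.span {Polynomial.cyclotomic m R, (X : R[X]) ^ d - 1} with hI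
  -- X^m - 1 = (X^d - 1) * Φ_m * S
  have hmem : d ∈ m.properDivisors :=
    Nat.mem_properDivisors.mpr ⟨hdvd, lt_of_le_of_ne (Nat.le_of_dvd hm hdvd) hdm⟩
  obtain ⟨S, hS⟩ := X_pow_sub_one_mul_cyclotomic_dvd_X_pow_sub_one_of_dvd R hmem
  let mk : R[X] →+* R[X] ⧸ I := Ideal.Quotient.mk I
  have hΦ : mk (cyclotomic m R) = 0 :=
    Ideal.Quotient.eq_zero_iff_mem.mpr (Ideal.subset_span (by simp))
  have hX : mk ((X : R[X]) ^ d - 1) = 0 :=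
    Ideal.Quotient.eq_zero_iff_mem.mpr (Ideal.subset_span (by simp))
  have hXpow : (mk X) ^ d = 1 := by
    have h := hX
    rw [map_sub, map_pow, map_one, sub_eq_zero] at h
    exact h
  have hXunit : IsUnit (mk X) := IsUnit.of_pow_eq_one hXpow hd0.ne'
  -- take derivatives of hS
  have hder := congrArg derivative hS
  rw [derivative_sub, derivative_one, derivative_X_pow, sub_zero] at hder
  -- apply mk
  have hzero : mk (C (m : R) * X ^ (m - 1)) = 0 := by
    rw [hder]
    have h1 : mk ((X : R[X]) ^ d - 1) = 0 := hX
    have : derivative (((X : R[X]) ^ d - 1) * cyclotomic m R * S) =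
        derivative ((X : R[X]) ^ d - 1) * (cyclotomic m R * S) +
        ((X : R[X]) ^ d - 1) * derivative (cyclotomic m R * S) := by
      rw [mul_assoc]; exact derivative_mul
    rw [this]
    simp only [map_add, map_mul, hΦ, h1, zero_mul, mul_zero, add_zero]
  have hunit : IsUnit (mk (C (m : R) * X ^ (m - 1))) := by
    rw [map_mul, map_pow]
    refine IsUnit.mul ?_ (hXunit.pow _)
    have : mk (C (m : R)) = (Ideal.Quotient.mk I).comp (C : R →+* R[X]) (m : R) := rfl
    exact hu.map ((Ideal.Quotient.mk I).comp (C : R →+* R[X]))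
  rw [hzero] at hunit
  have h01 : (0 : R[X] ⧸ I) = 1 := isUnit_zero_iff.mp hunit
  rw [Ideal.eq_top_iff_one]
  exact Ideal.Quotient.eq_zero_iff_mem.mp (by rw [map_one, ← h01])
end

section
/- Let p be a prime number, r ≥ 1 an integer, and R a commutative ring in which the image of p is invertible. Then the natural R-algebra homomorphism R[X]/(X^{p^r} − 1) → R[X]/(X^{p^{r−1}} − 1) × R[X]/(Φ_{p^r}), whose components are induced by the divisibilities (X^{p^{r−1}} − 1) ∣ (X^{p^r} − 1) and Φ_{p^r} ∣ (X^{p^r} − 1) in R[X], is bijective. -/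
open Polynomial Finset

/-! Write `Y = X ^ p ^ (r - 1)`. Then `Φ_{p^r} = 1 + Y + ⋯ + Y ^ (p - 1)` and `X ^ p ^ r - 1 = (Y - 1) Φ_{p^r}`.
Modulo `Y - 1` the cyclotomic factor is congruent to the unit `p`, so the two factors are
coprime and the map is the Chinese remainder isomorphism. -/

theorem sub_one_dvd_geom_sum_sub_natCast {A : Type*} [CommRing A] (x : A) (n : ℕ) :
    x - 1 ∣ ∑ i ∈ range n, x ^ i - n := by
  induction n with
  | zero => simp
  | succ n ih =>
    have hsplit : ∑ i ∈ range (n + 1), x ^ i - (n + 1 : ℕ) =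
        (∑ i ∈ range n, x ^ i - n) + (x ^ n - 1) := by
      rw [sum_range_succ]; push_cast; ring
    rw [hsplit]
    exact dvd_add ih (sub_one_dvd_pow_sub_one x n)

theorem isCoprime_sub_one_geom_sum {A : Type*} [CommRing A] (x : A) {n : ℕ}
    (hn : IsUnit (n : A)) : IsCoprime (x - 1) (∑ i ∈ range n, x ^ i) := by
  obtain ⟨g, hg⟩ := sub_one_dvd_geom_sum_sub_natCast x n
  rw [sub_eq_iff_eq_add'.mp hg]
  exact (isCoprime_one_right.of_isCoprime_of_dvd_right hn.dvd).add_mul_left_right g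

theorem isCoprime_X_pow_sub_one_cyclotomic_prime_pow {R : Type*} [CommRing R] {p : ℕ}
    (hp : p.Prime) (n : ℕ) (hu : IsUnit (p : R)) :
    IsCoprime ((X : R[X]) ^ p ^ n - 1) (cyclotomic (p ^ (n + 1)) R) := by
  rw [cyclotomic_prime_pow_eq_geom_sum hp]
  exact isCoprime_sub_one_geom_sum _ (by simpa using hu.map C)

theorem Ideal.bijective_prod_factor_of_isCoprime {A : Type*} [CommRing A] {I J K : Ideal A}
    (hIJ : IsCoprime I J) (hK : K = I ⊓ J) (hI : K ≤ I) (hJ : K ≤ J) :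
    Function.Bijective ((Ideal.Quotient.factor hI).prod (Ideal.Quotient.factor hJ)) := by
  subst hK
  convert (Ideal.quotientInfEquivQuotientProd I J hIJ).bijective
  ext x <;> simp

theorem Ideal.bijective_prod_factor_span_singleton_mul {A : Type*} [CommRing A] {a b c : A}
    (hab : IsCoprime a b) (hc : c = a * b) (ha : span {c} ≤ span {a}) (hb : span {c} ≤ span {b}) :
    Function.Bijective ((Ideal.Quotient.factor ha).prod (Ideal.Quotient.factor hb)) := by
  have hspan : IsCoprime (span {a}) (span {b}) := (isCoprime_span_singleton_iff a b).mpr hab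
  refine bijective_prod_factor_of_isCoprime hspan ?_ ha hb
  rw [hc, ← span_singleton_mul_span_singleton, mul_eq_inf_of_isCoprime hspan]

/-- If `p` is a prime invertible in `R` and `r ≥ 1`, the natural map
`R[X]/(X^{p^r} − 1) → R[X]/(X^{p^{r−1}} − 1) × R[X]/(Φ_{p^r})` is bijective. -/
theorem cyclotomic_splitting_prime_power
    {R : Type*} [CommRing R] (p : ℕ) (hp : p.Prime) (r : ℕ) (hr : 1 ≤ r)
    (hu : IsUnit (p : R)) :
    Function.Bijective
      (RingHom.prod
        (Ideal.Quotient.factor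
          (S := Ideal.span {(X : R[X]) ^ p ^ r - 1})
          (T := Ideal.span {(X : R[X]) ^ p ^ (r - 1) - 1})
          (Ideal.span_singleton_le_span_singleton.mpr (by
            obtain ⟨c, hc⟩ : p ^ (r - 1) ∣ p ^ r := pow_dvd_pow p (Nat.sub_le r 1)
            rw [hc, pow_mul]
            simpa using sub_dvd_pow_sub_pow ((X : R[X]) ^ p ^ (r - 1)) 1 c)))
        (Ideal.Quotient.factor
          (S := Ideal.span {(X : R[X]) ^ p ^ r - 1})
          (T := Ideal.span {Polynomial.cyclotomic (p ^ r) R})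
          (Ideal.span_singleton_le_span_singleton.mpr
            (Polynomial.cyclotomic.dvd_X_pow_sub_one (p ^ r) R)))) := by
  obtain ⟨n, rfl⟩ := Nat.exists_eq_add_of_le' hr
  refine Ideal.bijective_prod_factor_span_singleton_mul
    (isCoprime_X_pow_sub_one_cyclotomic_prime_pow hp n hu) ?_ _ _
  have : Fact p.Prime := ⟨hp⟩
  rw [mul_comm]
  exact (cyclotomic_prime_pow_mul_X_pow_sub_one R p n).symm
end

section
/- Let m be a positive integer, R a commutative ring, and ζ ∈ R an element at which the m-th cyclotomic polynomial with integer coefficients evaluates to zero. Then ∏_{d=1}^{m−1} (1 − ζ^d) = m in R. -/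
/-! The root of `Φ_m` in `ℤ[X] ⧸ (Φ_m)` is the universal root of `Φ_m`: every root `ζ` of `Φ_m` in a
commutative ring is its image under a ring map. Since `Φ_m` is irreducible over `ℤ` and of positive
degree, `ℤ[X] ⧸ (Φ_m)` is a domain of characteristic zero, so its root is a primitive `m`-th root of
unity, and there the identity is `1 + X + ⋯ + X^(m-1) = ∏_{d=1}^{m-1} (X - μ^d)` evaluated at `X = 1`. -/

open Polynomial

theorem IsPrimitiveRoot.prod_Ico_one_sub_pow_eq {R : Type*} [CommRing R] [IsDomain R] {m : ℕ}
    (hm : 0 < m) {μ : R} (hμ : IsPrimitiveRoot μ m) :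
    ∏ d ∈ Finset.Ico 1 m, (1 - μ ^ d) = m := by
  obtain ⟨n, rfl⟩ := Nat.exists_eq_add_of_lt hm
  rw [zero_add] at hμ ⊢
  rw [Finset.prod_Ico_eq_prod_range, Nat.add_sub_cancel, Nat.cast_add_one]
  simpa only [add_comm 1] using hμ.prod_one_sub_pow_eq_order

namespace AdjoinRoot

instance isDomain_cyclotomic_int (m : ℕ) [NeZero m] : IsDomain (AdjoinRoot (cyclotomic m ℤ)) :=
  isDomain_of_prime (cyclotomic.irreducible (NeZero.pos m)).prime

instance charZero_cyclotomic_int (m : ℕ) [NeZero m] : CharZero (AdjoinRoot (cyclotomic m ℤ)) :=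
  charZero_of_injective_algebraMap <| of.injective_of_degree_ne_zero <| by
    rw [degree_cyclotomic, Nat.cast_ne_zero]
    exact (Nat.totient_pos.mpr (NeZero.pos m)).ne'

theorem isPrimitiveRoot_root_cyclotomic_int {m : ℕ} (hm : 0 < m) :
    IsPrimitiveRoot (root (cyclotomic m ℤ)) m := by
  have : NeZero m := ⟨hm.ne'⟩
  rw [← isRoot_cyclotomic_iff_charZero hm, ← map_cyclotomic m (of (cyclotomic m ℤ))]
  exact isRoot_root _

end AdjoinRoot

/-- If `ζ` is a root in a commutative ring `R` of the `m`-th cyclotomic polynomial over `ℤ`,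
then `∏_{d=1}^{m−1} (1 − ζ^d) = m`. -/
theorem prod_one_sub_pow_eq_card
    {R : Type*} [CommRing R] (m : ℕ) (hm : 0 < m) (ζ : R)
    (hζ : Polynomial.aeval ζ (Polynomial.cyclotomic m ℤ) = 0) :
    ∏ d ∈ Finset.Ico 1 m, (1 - ζ ^ d) = (m : R) := by
  have : NeZero m := ⟨hm.ne'⟩
  have hroot := (AdjoinRoot.isPrimitiveRoot_root_cyclotomic_int hm).prod_Ico_one_sub_pow_eq hm
  rw [aeval_def] at hζ
  simpa only [map_prod, map_sub, map_one, map_pow, map_natCast, AdjoinRoot.lift_root]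
    using congrArg (AdjoinRoot.lift (algebraMap ℤ R) ζ hζ) hroot
end

section
/- Let m be a positive integer, R a commutative ring in which the image of m is invertible, and ζ ∈ R an element at which the m-th cyclotomic polynomial with integer coefficients evaluates to zero. Then for every integer d with 0 < d < m, the element 1 − ζ^d is a unit of R. -/
/-!
Since `Φ_m(ζ) = 0` we have `ζ^m = 1`. For a proper divisor `e` of `m`, write
`X^m - 1 = Φ_m · (X^e - 1) · r`; differentiating at `ζ` shows that `m ζ^(m-1)`, a unit, is a
multiple of `ζ^e - 1`. Finally `1 - ζ^d` divides `1 - ζ^gcd(d, m)`, because `gcd(d, m)` is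
congruent modulo `m` to a multiple of `d`.
-/

open Polynomial

theorem pow_eq_one_of_aeval_cyclotomic_eq_zero {R : Type*} [CommRing R] {m : ℕ} {ζ : R}
    (hζ : aeval ζ (cyclotomic m ℤ) = 0) : ζ ^ m = 1 := by
  obtain ⟨q, hq⟩ := cyclotomic.dvd_X_pow_sub_one m ℤ
  have h := congrArg (aeval ζ) hq
  rw [map_sub, map_pow, aeval_X, map_one, map_mul, hζ, zero_mul] at h
  exact sub_eq_zero.mp h

theorem isUnit_aeval_right_of_isUnit_aeval_derivative_mul {A R : Type*} [CommSemiring A]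
    [CommSemiring R] [Algebra A R] {p q : A[X]} {x : R} (hp : aeval x p = 0)
    (h : IsUnit (aeval x (derivative (p * q)))) : IsUnit (aeval x q) := by
  rw [derivative_mul, map_add, map_mul, map_mul, hp, zero_mul, add_zero] at h
  exact isUnit_of_mul_isUnit_right h

theorem isUnit_one_sub_pow_of_mem_properDivisors {R : Type*} [CommRing R] {m e : ℕ} {ζ : R}
    (hu : IsUnit (m : R)) (hζ : aeval ζ (cyclotomic m ℤ) = 0) (he : e ∈ m.properDivisors) :
    IsUnit (1 - ζ ^ e) := by
  have hm : m ≠ 0 := by rintro rfl; simp at he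
  have hζu : IsUnit ζ := IsUnit.of_pow_eq_one (pow_eq_one_of_aeval_cyclotomic_eq_zero hζ) hm
  obtain ⟨r, hr⟩ := X_pow_sub_one_mul_cyclotomic_dvd_X_pow_sub_one_of_dvd ℤ he
  have hderiv : IsUnit (aeval ζ (derivative (cyclotomic m ℤ * ((X ^ e - 1) * r)))) := by
    rw [← mul_assoc, mul_comm (cyclotomic m ℤ), ← hr, derivative_sub, derivative_X_pow,
      derivative_one, sub_zero]
    simpa using hu.mul (hζu.pow (m - 1))
  have h := isUnit_aeval_right_of_isUnit_aeval_derivative_mul hζ hderiv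
  rw [map_mul, map_sub, map_pow, aeval_X, map_one] at h
  simpa using (isUnit_of_mul_isUnit_left h).neg

theorem one_sub_pow_dvd_one_sub_pow_gcd {R : Type*} [CommRing R] {m d : ℕ} {ζ : R}
    (hζ : ζ ^ m = 1) (h : d.gcd m < m) : 1 - ζ ^ d ∣ 1 - ζ ^ d.gcd m := by
  obtain ⟨k, -, hk⟩ := Nat.exists_mul_mod_eq_gcd h
  rw [← hk, ← pow_eq_pow_mod _ hζ, pow_mul]
  simpa using sub_dvd_pow_sub_pow 1 (ζ ^ d) k

theorem one_sub_pow_isUnit_of_cyclotomic_root_general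
    {R : Type*} [CommRing R] (m : ℕ) (hu : IsUnit (m : R)) (ζ : R)
    (hζ : Polynomial.aeval ζ (Polynomial.cyclotomic m ℤ) = 0)
    (d : ℕ) (hd0 : 0 < d) (hdm : d < m) :
    IsUnit (1 - ζ ^ d) := by
  have hgcd : d.gcd m < m := (Nat.gcd_le_left m hd0).trans_lt hdm
  have he : d.gcd m ∈ m.properDivisors := Nat.mem_properDivisors.2 ⟨Nat.gcd_dvd_right d m, hgcd⟩
  exact isUnit_of_dvd_unit
    (one_sub_pow_dvd_one_sub_pow_gcd (pow_eq_one_of_aeval_cyclotomic_eq_zero hζ) hgcd)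
    (isUnit_one_sub_pow_of_mem_properDivisors hu hζ he)

/-- If `m` is invertible in `R` and `ζ` is a root of the `m`-th cyclotomic polynomial over `ℤ`,
then `1 − ζ^d` is a unit for every `0 < d < m`. -/
theorem one_sub_pow_isUnit_of_cyclotomic_root
    {R : Type*} [CommRing R] (m : ℕ) (hm : 0 < m) (hu : IsUnit (m : R)) (ζ : R)
    (hζ : Polynomial.aeval ζ (Polynomial.cyclotomic m ℤ) = 0)
    (d : ℕ) (hd0 : 0 < d) (hdm : d < m) :
    IsUnit (1 - ζ ^ d) :=
  one_sub_pow_isUnit_of_cyclotomic_root_general m hu ζ hζ d hd0 hdm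
end

section
/- Let N be a group, G a commutative group, and φ : G → Aut(N) an action of G on N such that for all g ∈ G and n ∈ N the element (φ(g)(n))·n⁻¹ lies in the commutator subgroup of N (i.e., the induced action of G on the abelianization of N is trivial). Then the abelianization of the semidirect product N ⋊_φ G is isomorphic, as a group, to (Abelianization of N) × G. -/
/-- If a commutative group `G` acts on a group `N` so that the induced action on the
abelianization of `N` is trivial, then the abelianization of `N ⋊ G` is isomorphic to
`(Abelianization N) × G`. -/
theorem abelianization_semidirectProduct
    {N G : Type*} [Group N] [CommGroup G] (φ : G →* MulAut N)
    (h : ∀ (g : G) (n : N), (φ g n) * n⁻¹ ∈ commutator N) :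
    Nonempty (Abelianization (N ⋊[φ] G) ≃* Abelianization N × G) := by
  have key : ∀ (g : G) (n : N), Abelianization.of (φ g n) = Abelianization.of n := by
    intro g n
    have h1 : Abelianization.of ((φ g n) * n⁻¹) = 1 :=
      (QuotientGroup.eq_one_iff _).mpr (h g n)
    rw [map_mul, map_inv] at h1
    exact eq_of_mul_inv_eq_one h1
  let f : N ⋊[φ] G →* Abelianization N × G :=
    { toFun := fun x => (Abelianization.of x.left, x.right)
      map_one' := by simp
      map_mul' := by
        intro x y
        ext
        · simp only [SemidirectProduct.mul_left, map_mul, key, Prod.fst_mul]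
        · simp [SemidirectProduct.mul_right] }
  let F : Abelianization (N ⋊[φ] G) →* Abelianization N × G := Abelianization.lift f
  let i1 : Abelianization N →* Abelianization (N ⋊[φ] G) :=
    Abelianization.lift ((Abelianization.of).comp (SemidirectProduct.inl))
  let i2 : G →* Abelianization (N ⋊[φ] G) :=
    (Abelianization.of).comp SemidirectProduct.inr
  let Finv : Abelianization N × G →* Abelianization (N ⋊[φ] G) := i1.coprod i2
  have h1 : Finv.comp F = MonoidHom.id _ := by
    apply Abelianization.hom_ext
    apply SemidirectProduct.hom_ext
    · ext n
      simp [F, Finv, f, i1, i2]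
    · ext g
      simp [F, Finv, f, i1, i2]
  have h2 : F.comp Finv = MonoidHom.id _ := by
    ext x
    · obtain ⟨a, g⟩ := x
      induction a using QuotientGroup.induction_on with
      | _ n =>
        show ((F.comp Finv) (Abelianization.of n, g)).1 = Abelianization.of n
        simp [F, Finv, f, i1, i2]
    · obtain ⟨a, g⟩ := x
      induction a using QuotientGroup.induction_on with
      | _ n =>
        show ((F.comp Finv) (Abelianization.of n, g)).2 = g
        simp [F, Finv, f, i1, i2]
  exact ⟨{ toFun := F, invFun := Finv,
           left_inv := fun x => congrArg (fun (k : _ →* _) => k x) h1,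
           right_inv := fun x => congrArg (fun (k : _ →* _) => k x) h2,
           map_mul' := map_mul F }⟩
end

section
/- Let F be a field of characteristic zero, K a finite-dimensional field extension of F, σ an F-algebra automorphism of K, and n ≥ 1 an integer such that the powers σ^0, σ^1, …, σ^{n−1} are pairwise distinct. Let d_1, …, d_{n−1} be integers such that for every y ∈ K with Tr_{K/F}(y) = 0 one has (d_1 + ⋯ + d_{n−1})·y = d_1·σ(y) + d_2·σ²(y) + ⋯ + d_{n−1}·σ^{n−1}(y). Then d_1 = d_2 = ⋯ = d_{n−1} = 0. -/
/-!
In characteristic zero every element of `K` is a scalar from `F` plus a trace-zero element, and both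
sides of the relation agree on scalars because `σ` fixes `F`; so the relation holds on all of `K`.
It then says that the characters `σ^0, …, σ^{n-1}` satisfy a `K`-linear relation whose coefficients
are `∑ dᵢ, -d₁, …, -d_{n-1}`, and Dedekind's independence of characters forces these to vanish.
-/

open Finset

theorem Algebra.exists_algebraMap_add_eq_of_trace_eq_zero {F K : Type*} [Field F] [CharZero F]
    [CommRing K] [Nontrivial K] [Algebra F K] [Module.Free F K] [Module.Finite F K] (x : K) :
    ∃ a : F, ∃ y : K, Algebra.trace F K y = 0 ∧ algebraMap F K a + y = x := by
  have hrank : (Module.finrank F K : F) ≠ 0 := Nat.cast_ne_zero.2 Module.finrank_pos.ne'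
  set a : F := Algebra.trace F K x / Module.finrank F K
  refine ⟨a, x - algebraMap F K a, ?_, add_sub_cancel _ _⟩
  rw [map_sub, Algebra.trace_algebraMap, nsmul_eq_mul, mul_div_cancel₀ _ hrank, sub_self]

theorem AlgEquiv.eq_zero_of_sum_range_mul_pow_apply_eq_zero {F K : Type*} [CommSemiring F]
    [Field K] [Algebra F K] (σ : K ≃ₐ[F] K) (n : ℕ)
    (hdist : ∀ i j : ℕ, i < n → j < n → σ ^ i = σ ^ j → i = j) (c : ℕ → K)
    (hc : ∀ x : K, ∑ i ∈ range n, c i * (σ ^ i) x = 0) : ∀ i < n, c i = 0 := by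
  let χ : Fin n → K →* K := fun i => ((σ ^ (i : ℕ) : K ≃ₐ[F] K) : K →+* K).toMonoidHom
  have hχ : Function.Injective χ := fun i j hij =>
    Fin.ext (hdist i j i.isLt j.isLt (AlgEquiv.ext (DFunLike.congr_fun hij :)))
  have hli := (linearIndependent_monoidHom K K).comp χ hχ
  intro i hi
  refine Fintype.linearIndependent_iff.mp hli (fun j => c j) ?_ ⟨i, hi⟩
  funext x
  simp only [Finset.sum_apply, Pi.smul_apply, smul_eq_mul, Pi.zero_apply]
  exact (Fin.sum_univ_eq_sum_range (fun j => c j * (σ ^ j) x) n).trans (hc x)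

/-- Independence of characters: let `K/F` be a finite extension of fields of characteristic zero,
`σ` an `F`-algebra automorphism of `K` whose powers `σ^0, …, σ^{n−1}` are pairwise distinct, and
`d_1, …, d_{n−1}` integers with `(∑ d_i)·y = ∑ d_i·σ^i(y)` for every trace-zero `y ∈ K`.
Then all `d_i` vanish. -/
theorem eq_zero_of_trace_zero_relation
    {F K : Type*} [Field F] [CharZero F] [Field K] [Algebra F K] [FiniteDimensional F K]
    (σ : K ≃ₐ[F] K) (n : ℕ) (hn : 1 ≤ n)
    (hdist : ∀ i j : ℕ, i < n → j < n → σ ^ i = σ ^ j → i = j)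
    (d : ℕ → ℤ)
    (h : ∀ y : K, Algebra.trace F K y = 0 →
      (∑ i ∈ Finset.Ico 1 n, d i) • y = ∑ i ∈ Finset.Ico 1 n, d i • (σ ^ i) y) :
    ∀ i ∈ Finset.Ico 1 n, d i = 0 := by
  have h_all (x : K) : (∑ i ∈ Ico 1 n, d i) • x = ∑ i ∈ Ico 1 n, d i • (σ ^ i) x := by
    obtain ⟨a, y, hy, rfl⟩ := Algebra.exists_algebraMap_add_eq_of_trace_eq_zero (F := F) x
    simp only [smul_add, map_add, AlgEquiv.commutes, sum_add_distrib, ← sum_smul, h y hy]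
  let c : ℕ → K := fun i => if i = 0 then ((∑ i ∈ Ico 1 n, d i : ℤ) : K) else -(d i : K)
  have hc := σ.eq_zero_of_sum_range_mul_pow_apply_eq_zero n hdist c fun x => by
    have h_tail : ∑ i ∈ Ico 1 n, c i * (σ ^ i) x = -∑ i ∈ Ico 1 n, (d i : K) * (σ ^ i) x := by
      rw [← sum_neg_distrib]
      refine sum_congr rfl fun i hi => ?_
      simp [c, Nat.one_le_iff_ne_zero.mp (mem_Ico.mp hi).1]
    rw [range_eq_Ico, sum_eq_sum_Ico_succ_bot hn, zero_add, h_tail, ← sub_eq_add_neg, sub_eq_zero]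
    simpa [c, zsmul_eq_mul] using h_all x
  have : CharZero K := charZero_of_injective_algebraMap (algebraMap F K).injective
  intro i hi
  obtain ⟨hi1, hin⟩ := mem_Ico.mp hi
  exact_mod_cast (by simpa [c, Nat.one_le_iff_ne_zero.mp hi1] using hc i hin : (d i : K) = 0)
end

section
/- Let m be a positive integer and R a commutative ring in which the image of m is invertible. Then the quotient R-algebra R[X]/(Φ_m) is formally étale over R. -/
/-!
Write `X ^ m - 1 = Φ_m * g`. Differentiating and multiplying by `X` gives
`m * X ^ m = X * (Φ_m' * g + Φ_m * g')`, and substituting `X ^ m = 1 + Φ_m * g` yields the Bézout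
identity `m = Φ_m' * (X * g) + Φ_m * (X * g' - m * g)`. Once `m` is inverted, `Φ_m'` is thus a unit
modulo `Φ_m`, so `R[X]/(Φ_m)` is the standard étale algebra of the pair `(Φ_m, 1)`.
-/

open Polynomial

theorem X_mul_derivative_X_pow {R : Type*} [Semiring R] (n : ℕ) :
    X * derivative (X ^ n : R[X]) = C (n : R) * X ^ n := by
  rcases n with _ | n
  · simp
  · rw [derivative_X_pow, Nat.add_sub_cancel, ← mul_assoc, X_mul_C, mul_assoc, ← pow_succ']

theorem exists_derivative_mul_add_mul_eq_one_of_dvd_X_pow_sub_one {R : Type*} [CommRing R]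
    {f : R[X]} {m : ℕ} (hf : f ∣ X ^ m - 1) (hm : IsUnit (m : R)) :
    ∃ p q : R[X], derivative f * p + f * q = 1 := by
  obtain ⟨g, hg⟩ := hf
  obtain ⟨u, hu⟩ := hm.exists_left_inv
  have hder : C (m : R) * X ^ m = X * (derivative f * g + f * derivative g) := by
    rw [← X_mul_derivative_X_pow, ← derivative_mul, ← hg, derivative_sub, derivative_one,
      sub_zero]
  have hCu : C u * C (m : R) = 1 := by rw [← C_mul, hu, C_1]
  refine ⟨C u * X * g, C u * (X * derivative g - C (m : R) * g), ?_⟩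
  linear_combination (-C u) * hder + C u * C (m : R) * hg + hCu

theorem formallyEtale_adjoinRoot_of_derivative_mul_add_mul_eq_one {R : Type*} [CommRing R]
    {f : R[X]} (hf : f.Monic) {p q : R[X]} (h : derivative f * p + f * q = 1) :
    Algebra.FormallyEtale R (AdjoinRoot f) := by
  let P : StandardEtalePair R := ⟨f, hf, 1, p, q, 0, by rwa [pow_zero]⟩
  have hP : Submonoid.powers (AdjoinRoot.mk P.f P.g) ≤ IsUnit.submonoid _ := by
    simp [P]
  exact .of_equiv (P.equivAwayAdjoinRoot.trans
    ((IsLocalization.atUnits _ _ hP).symm.restrictScalars R))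

theorem cyclotomic_extension_formallyEtale_general
    {R : Type*} [CommRing R] (m : ℕ) (hu : IsUnit (m : R)) :
    Algebra.FormallyEtale R (Polynomial R ⧸ Ideal.span {Polynomial.cyclotomic m R}) := by
  obtain ⟨p, q, h⟩ :=
    exists_derivative_mul_add_mul_eq_one_of_dvd_X_pow_sub_one (cyclotomic.dvd_X_pow_sub_one m R) hu
  exact formallyEtale_adjoinRoot_of_derivative_mul_add_mul_eq_one (cyclotomic.monic m R) h

/-- If `m` is invertible in a commutative ring `R`, the cyclotomic extension `R[X]/(Φ_m)` is
formally étale over `R`. -/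
theorem cyclotomic_extension_formallyEtale
    {R : Type*} [CommRing R] (m : ℕ) (hm : 0 < m) (hu : IsUnit (m : R)) :
    Algebra.FormallyEtale R (Polynomial R ⧸ Ideal.span {Polynomial.cyclotomic m R}) :=
  cyclotomic_extension_formallyEtale_general m hu
end
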